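/- Let m ≥ 1, r ∈ ℤ_{≥0}, β ∈ ℂ, λ_i ∈ ℂ* and α_i ∈ ℂ for i = 0,1,…,m. Then the Virasoro module M(V_β,Ω(λ_0,α_0)) ⊗ ⊗_{i=1}^m Ω(λ_i,α_i) is isomorphic to Ω(λ_0,α_0−β) ⊗ ⊗_{i=1}^m Ω(λ_i,α_i) = ⊗_{i=0}^m Ω(λ_i, α_i − δ_{i,0}β): there is a linear bijection commuting with the respective operators L_k for all k ∈ ℤ. -/

import Mathlib

open TensorProduct

/-- Substitution `X_i ↦ X_i - k` (in the variable `i` only) on `ℂ[X_0,…,X_{N-1}]`. -/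
noncomputable def shiftVar {N : ℕ} (i : Fin N) (k : ℂ) :
    MvPolynomial (Fin N) ℂ →ₗ[ℂ] MvPolynomial (Fin N) ℂ :=
  (MvPolynomial.aeval fun j =>
    MvPolynomial.X j - if j = i then MvPolynomial.C k else 0).toLinearMap

/-- The operator `L_k` on `⊗_i Ω(λ_i,α_i) = ℂ[X_0,…,X_{N-1}]`. -/
noncomputable def omegaOp {N : ℕ} (lam al : Fin N → ℂ) (k : ℤ) :
    MvPolynomial (Fin N) ℂ →ₗ[ℂ] MvPolynomial (Fin N) ℂ :=
  ∑ i : Fin N, (lam i ^ k) •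
    ((LinearMap.mulLeft ℂ (MvPolynomial.X i - MvPolynomial.C ((k : ℂ) * al i))).comp
      (shiftVar i (k : ℂ)))

/-- The operator `L_k` on `M(V,Ω(λ_0,α_0)) ⊗ ⊗_{i=1}^m Ω(λ_i,α_i) = V ⊗ ℂ[X_0,…,X_m]`. -/
noncomputable def MOp {V : Type*} [AddCommGroup V] [Module ℂ V]
    (B : ℕ → V →ₗ[ℂ] V) (r : ℕ) {m : ℕ} (lam al : Fin (m + 1) → ℂ) (k : ℤ) :
    V ⊗[ℂ] MvPolynomial (Fin (m + 1)) ℂ →ₗ[ℂ] V ⊗[ℂ] MvPolynomial (Fin (m + 1)) ℂ :=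
  TensorProduct.map LinearMap.id (omegaOp lam al k) +
  ∑ j ∈ Finset.range (r + 1),
    (((k : ℂ) ^ (j + 1)) / ((j + 1).factorial : ℂ)) •
      TensorProduct.map (B j) ((lam 0 ^ k) • shiftVar 0 (k : ℂ))

/-- The operators of the one-dimensional `L̄_r`-module `V_β = ℂ`:
`B_0 = β·id` and `B_i = 0` for `i ≥ 1`. -/
noncomputable def Vbeta (be : ℂ) : ℕ → (ℂ →ₗ[ℂ] ℂ) :=
  fun j => if j = 0 then be • LinearMap.id else 0

/-!
For the one-dimensional module `V_β` only `B_0 = β` survives, and its contribution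
`k β λ_0^k f(X_0 - k, X_1, …)` is exactly the change of the `X_0`-factor of `Ω(λ_0, α_0)` into
`Ω(λ_0, α_0 - β)`, since `L_k` depends affinely on the `α_i`. Hence the canonical identification
`ℂ ⊗ ℂ[X_0, …, X_m] ≅ ℂ[X_0, …, X_m]` is the isomorphism.
-/

theorem omegaOp_sub {N : ℕ} (lam al c : Fin N → ℂ) (k : ℤ) :
    omegaOp lam (fun i => al i - c i) k =
      omegaOp lam al k + ∑ i, ((k : ℂ) * c i * lam i ^ k) • shiftVar i (k : ℂ) := by
  simp only [omegaOp, ← Finset.sum_add_distrib]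
  refine Finset.sum_congr rfl fun i _ => LinearMap.ext fun p => ?_
  simp only [LinearMap.add_apply, LinearMap.smul_apply, LinearMap.comp_apply,
    LinearMap.mulLeft_apply, MvPolynomial.smul_eq_C_mul, map_mul, map_sub]
  ring

theorem omegaOp_sub_single {N : ℕ} (lam al : Fin N → ℂ) (i₀ : Fin N) (be : ℂ) (k : ℤ) :
    omegaOp lam (fun i => al i - if i = i₀ then be else 0) k =
      omegaOp lam al k + ((k : ℂ) * be * lam i₀ ^ k) • shiftVar i₀ (k : ℂ) := by
  rw [omegaOp_sub]
  simp [mul_ite, ite_mul, ite_smul]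

theorem MOp_Vbeta (be : ℂ) (r : ℕ) {m : ℕ} (lam al : Fin (m + 1) → ℂ) (k : ℤ) :
    MOp (Vbeta be) r lam al k =
      TensorProduct.map LinearMap.id
        (omegaOp lam al k + ((k : ℂ) * be * lam 0 ^ k) • shiftVar 0 (k : ℂ)) := by
  have hV0 : Vbeta be 0 = be • LinearMap.id := if_pos rfl
  rw [MOp, Finset.sum_eq_single_of_mem 0 (by simp) fun j _ hj => by simp [Vbeta, hj], hV0,
    TensorProduct.map_add_right, TensorProduct.map_smul_left, TensorProduct.map_smul_right,
    TensorProduct.map_smul_right, smul_smul, smul_smul]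
  congr 2
  push_cast
  ring

theorem TensorProduct.lid_map_id {R M N : Type*} [CommSemiring R] [AddCommMonoid M]
    [Module R M] [AddCommMonoid N] [Module R N] (f : M →ₗ[R] N) (x : R ⊗[R] M) :
    TensorProduct.lid R N (TensorProduct.map LinearMap.id f x) = f (TensorProduct.lid R M x) := by
  induction x using TensorProduct.induction_on with
  | zero => simp
  | tmul c y => simp
  | add y z hy hz => simp only [map_add, hy, hz]

theorem statement10_general (m r : ℕ) (be : ℂ)
    (lam al : Fin (m + 1) → ℂ) :
    ∃ φ : (ℂ ⊗[ℂ] MvPolynomial (Fin (m + 1)) ℂ) ≃ₗ[ℂ] MvPolynomial (Fin (m + 1)) ℂ,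
      ∀ (k : ℤ) (x : ℂ ⊗[ℂ] MvPolynomial (Fin (m + 1)) ℂ),
        φ (MOp (Vbeta be) r lam al k x) =
          omegaOp lam (fun i => al i - if i = 0 then be else 0) k (φ x) := by
  refine ⟨TensorProduct.lid ℂ _, fun k x => ?_⟩
  rw [MOp_Vbeta, omegaOp_sub_single, TensorProduct.lid_map_id]

/-- **Remark 2.2(1).** Let `m ≥ 1`, `r ∈ ℤ_{≥0}`, `β ∈ ℂ`, `λ_i ∈ ℂ*`, `α_i ∈ ℂ`.
Then `M(V_β,Ω(λ_0,α_0)) ⊗ ⊗_{i=1}^m Ω(λ_i,α_i) ≅ ⊗_{i=0}^m Ω(λ_i, α_i − δ_{i,0}β)`. -/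
theorem statement10 (m r : ℕ) (hm : 1 ≤ m) (be : ℂ)
    (lam al : Fin (m + 1) → ℂ) (hlam : ∀ i, lam i ≠ 0) :
    ∃ φ : (ℂ ⊗[ℂ] MvPolynomial (Fin (m + 1)) ℂ) ≃ₗ[ℂ] MvPolynomial (Fin (m + 1)) ℂ,
      ∀ (k : ℤ) (x : ℂ ⊗[ℂ] MvPolynomial (Fin (m + 1)) ℂ),
        φ (MOp (Vbeta be) r lam al k x) =
          omegaOp lam (fun i => al i - if i = 0 then be else 0) k (φ x) :=
  statement10_general m r be lam al
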